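/- arXiv:1812.04455 — 5 statements merged into one kernel-verified Lean document; each statement's English description precedes it below -/
import Mathlib

section
/- Let χ₁, χ₂, λ₁, λ₂, μ₁, μ₂ be positive real numbers. If λ₂ > λ₁ and χ₂λ₂μ₂ ≤ χ₁λ₁μ₁, then M̲ = χ₁μ₁ − χ₂μ₂. -/
/-!
Since `λ₁ < λ₂` and `χ₂λ₂μ₂ ≤ χ₁λ₁μ₁`, the function `χ₂λ₂μ₂e^{-λ₂s} - χ₁λ₁μ₁e^{-λ₁s}` is
nonpositive on `(0, ∞)`, so its negative part is `χ₁λ₁μ₁e^{-λ₁s} - χ₂λ₂μ₂e^{-λ₂s}`, which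
integrates termwise to `χ₁μ₁ - χ₂μ₂` because `∫₀^∞ e^{-λs} ds = 1/λ`.
-/

open MeasureTheory Real Set

lemma integral_exp_neg_mul_Ioi_zero {b : ℝ} (hb : 0 < b) :
    ∫ s in Ioi (0 : ℝ), exp (-b * s) = b⁻¹ := by
  rw [integral_exp_mul_Ioi (neg_neg_of_pos hb)]
  simp

lemma integral_mul_exp_sub_mul_exp_Ioi_zero {a b : ℝ} (ha : 0 < a) (hb : 0 < b) (A B : ℝ) :
    ∫ s in Ioi (0 : ℝ), (A * exp (-a * s) - B * exp (-b * s)) = A / a - B / b := by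
  rw [integral_sub ((exp_neg_integrableOn_Ioi 0 ha).const_mul A)
      ((exp_neg_integrableOn_Ioi 0 hb).const_mul B),
    integral_const_mul, integral_const_mul,
    integral_exp_neg_mul_Ioi_zero ha, integral_exp_neg_mul_Ioi_zero hb, div_eq_mul_inv,
    div_eq_mul_inv]

lemma mul_exp_neg_mul_le_mul_exp_neg_mul {a b A B s : ℝ} (hBA : B ≤ A) (hA : 0 ≤ A)
    (hab : a ≤ b) (hs : 0 ≤ s) : B * exp (-b * s) ≤ A * exp (-a * s) :=
  mul_le_mul hBA (exp_le_exp.2 (by nlinarith)) (exp_pos _).le hA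

theorem stmt_1_general (χ₁ χ₂ lam₁ lam₂ μ₁ μ₂ : ℝ)
    (hχ₁ : 0 < χ₁) (hlam₁ : 0 < lam₁) (hlam₂ : 0 < lam₂)
    (hμ₁ : 0 < μ₁)
    (hlam : lam₂ > lam₁) (hle : χ₂ * lam₂ * μ₂ ≤ χ₁ * lam₁ * μ₁) :
    (∫ s in Set.Ioi (0:ℝ),
        max 0 (-(χ₂ * lam₂ * μ₂ * Real.exp (-lam₂ * s) - χ₁ * lam₁ * μ₁ * Real.exp (-lam₁ * s))))
      = χ₁ * μ₁ - χ₂ * μ₂ := by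
  have hA : 0 ≤ χ₁ * lam₁ * μ₁ := by positivity
  calc _ = ∫ s in Ioi (0 : ℝ),
        (χ₁ * lam₁ * μ₁ * exp (-lam₁ * s) - χ₂ * lam₂ * μ₂ * exp (-lam₂ * s)) := by
        refine setIntegral_congr_fun measurableSet_Ioi fun s hs => ?_
        rw [neg_sub, max_eq_right (sub_nonneg.2
          (mul_exp_neg_mul_le_mul_exp_neg_mul hle hA hlam.le (le_of_lt hs)))]
    _ = χ₁ * lam₁ * μ₁ / lam₁ - χ₂ * lam₂ * μ₂ / lam₂ :=
        integral_mul_exp_sub_mul_exp_Ioi_zero hlam₁ hlam₂ _ _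
    _ = χ₁ * μ₁ - χ₂ * μ₂ := by field_simp

/-- if lam₂ > lam₁ and χ₂lam₂μ₂ ≤ χ₁lam₁μ₁ then M̲ = χ₁μ₁ − χ₂μ₂. -/
theorem stmt_1 (χ₁ χ₂ lam₁ lam₂ μ₁ μ₂ : ℝ)
    (hχ₁ : 0 < χ₁) (hχ₂ : 0 < χ₂) (hlam₁ : 0 < lam₁) (hlam₂ : 0 < lam₂)
    (hμ₁ : 0 < μ₁) (hμ₂ : 0 < μ₂)
    (hlam : lam₂ > lam₁) (hle : χ₂ * lam₂ * μ₂ ≤ χ₁ * lam₁ * μ₁) :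
    (∫ s in Set.Ioi (0:ℝ),
        max 0 (-(χ₂ * lam₂ * μ₂ * Real.exp (-lam₂ * s) - χ₁ * lam₁ * μ₁ * Real.exp (-lam₁ * s))))
      = χ₁ * μ₁ - χ₂ * μ₂ :=
  stmt_1_general χ₁ χ₂ lam₁ lam₂ μ₁ μ₂ hχ₁ hlam₁ hlam₂ hμ₁ hlam hle
end

section
/- Let χ₁, χ₂, λ₁, λ₂, μ₁, μ₂ be positive real numbers. If λ₂ > λ₁ and χ₂λ₂μ₂ ≥ χ₁λ₁μ₁, then M̲ = (λ₂/λ₁ − 1) · χ₂μ₂ · (χ₁λ₁μ₁/(χ₂λ₂μ₂))^{λ₂/(λ₂−λ₁)}. -/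
/-!
Write `f s = A e^{-l₁ s} - B e^{-l₂ s}` with `A = χ₁l₁μ₁ ≤ B = χ₂l₂μ₂`. Since
`f s = e^{-l₂ s} (A e^{(l₂-l₁) s} - B)`, `f` changes sign exactly once, at
`s₀ = log (B/A) / (l₂ - l₁) ≥ 0`, so the integral of `(-f)₋ = max 0 f` over `(0, ∞)` is the
integral of `f` over `(s₀, ∞)`, namely `A e^{-l₁ s₀}/l₁ - B e^{-l₂ s₀}/l₂`. As `e^{(l₂-l₁) s₀} = B/A`,
both exponentials are powers of `A/B`, and the value collapses to the closed form.
-/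

open Real MeasureTheory Set

noncomputable def crossingTime (A B l₁ l₂ : ℝ) : ℝ := log (B / A) / (l₂ - l₁)

section

variable {A B l₁ l₂ : ℝ}

lemma integral_Ioi_sub_exp (hl₁ : 0 < l₁) (hl₂ : 0 < l₂) (c : ℝ) :
    ∫ s in Ioi c, (A * exp (-l₁ * s) - B * exp (-l₂ * s))
      = A * exp (-l₁ * c) / l₁ - B * exp (-l₂ * c) / l₂ := by
  have h₁ := integrableOn_exp_mul_Ioi (neg_neg_of_pos hl₁) c
  have h₂ := integrableOn_exp_mul_Ioi (neg_neg_of_pos hl₂) c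
  rw [integral_sub (h₁.const_mul A) (h₂.const_mul B), integral_const_mul, integral_const_mul,
    integral_exp_mul_Ioi (neg_neg_of_pos hl₁), integral_exp_mul_Ioi (neg_neg_of_pos hl₂)]
  ring

lemma sub_exp_pos_iff_crossingTime_lt (hA : 0 < A) (hB : 0 < B) (h12 : l₁ < l₂) (s : ℝ) :
    0 < A * exp (-l₁ * s) - B * exp (-l₂ * s) ↔ crossingTime A B l₁ l₂ < s := by
  have hfactor : A * exp (-l₁ * s) - B * exp (-l₂ * s)
      = exp (-l₂ * s) * (A * exp ((l₂ - l₁) * s) - B) := by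
    rw [mul_sub, mul_left_comm, ← exp_add]
    ring_nf
  rw [hfactor, mul_pos_iff_of_pos_left (exp_pos _), sub_pos, crossingTime,
    div_lt_iff₀ (sub_pos.2 h12), mul_comm s, log_lt_iff_lt_exp (div_pos hB hA), div_lt_iff₀ hA,
    mul_comm]

lemma exp_neg_mul_crossingTime₂ (hA : 0 < A) (hB : 0 < B) :
    exp (-l₂ * crossingTime A B l₁ l₂) = (A / B) ^ (l₂ / (l₂ - l₁)) := by
  rw [crossingTime, rpow_def_of_pos (div_pos hA hB), ← inv_div B A, log_inv]
  congr 1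
  ring

lemma exp_neg_mul_crossingTime₁ (hA : 0 < A) (hB : 0 < B) (h12 : l₁ ≠ l₂) :
    exp (-l₁ * crossingTime A B l₁ l₂) = (A / B) ^ (l₂ / (l₂ - l₁)) * (B / A) := by
  rw [← exp_neg_mul_crossingTime₂ hA hB, ← exp_log (div_pos hB hA), ← exp_add,
    crossingTime]
  congr 1
  field_simp [sub_ne_zero.2 h12.symm]
  ring

theorem integral_Ioi_max_zero_neg_sub_exp (hA : 0 < A) (hAB : A ≤ B) (hl₁ : 0 < l₁)
    (h12 : l₁ < l₂) :
    ∫ s in Ioi (0 : ℝ), max 0 (-(B * exp (-l₂ * s) - A * exp (-l₁ * s)))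
      = (l₂ / l₁ - 1) * (B / l₂) * (A / B) ^ (l₂ / (l₂ - l₁)) := by
  have hB : 0 < B := hA.trans_le hAB
  have hl₂ : 0 < l₂ := hl₁.trans h12
  set s₀ := crossingTime A B l₁ l₂
  have hs₀ : 0 ≤ s₀ := div_nonneg (log_nonneg ((one_le_div hA).2 hAB)) (sub_pos.2 h12).le
  have hindicator : ∀ s, max 0 (-(B * exp (-l₂ * s) - A * exp (-l₁ * s)))
      = (Ioi s₀).indicator (fun s => A * exp (-l₁ * s) - B * exp (-l₂ * s)) s := by
    intro s
    rw [neg_sub, indicator_apply]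
    split_ifs with hs
    · exact max_eq_right ((sub_exp_pos_iff_crossingTime_lt hA hB h12 s).2 hs).le
    · exact max_eq_left (not_lt.1 (mt (sub_exp_pos_iff_crossingTime_lt hA hB h12 s).1 hs))
  simp only [hindicator]
  rw [integral_indicator measurableSet_Ioi, Measure.restrict_restrict measurableSet_Ioi,
    Ioi_inter_Ioi, max_eq_left hs₀, integral_Ioi_sub_exp hl₁ hl₂,
    exp_neg_mul_crossingTime₁ hA hB h12.ne, exp_neg_mul_crossingTime₂ hA hB]
  field_simp

end

theorem stmt_2_general (χ₁ χ₂ lam₁ lam₂ μ₁ μ₂ : ℝ)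
    (hχ₁ : 0 < χ₁) (hlam₁ : 0 < lam₁)
    (hμ₁ : 0 < μ₁)
    (hlam : lam₂ > lam₁) (hge : χ₂ * lam₂ * μ₂ ≥ χ₁ * lam₁ * μ₁) :
    (∫ s in Set.Ioi (0:ℝ),
        max 0 (-(χ₂ * lam₂ * μ₂ * Real.exp (-lam₂ * s) - χ₁ * lam₁ * μ₁ * Real.exp (-lam₁ * s))))
      = (lam₂ / lam₁ - 1) * (χ₂ * μ₂) *
        ((χ₁ * lam₁ * μ₁ / (χ₂ * lam₂ * μ₂)) ^ (lam₂ / (lam₂ - lam₁))) := by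
  rw [integral_Ioi_max_zero_neg_sub_exp (by positivity) hge hlam₁ hlam]
  have hlam₂ : lam₂ ≠ 0 := (hlam₁.trans hlam).ne'
  congr 2
  field_simp

/-- if lam₂ > lam₁ and χ₂lam₂μ₂ ≥ χ₁lam₁μ₁ then
    M̲ = (lam₂/lam₁ − 1)·χ₂μ₂·(χ₁lam₁μ₁/(χ₂lam₂μ₂))^{lam₂/(lam₂−lam₁)}. -/
theorem stmt_2 (χ₁ χ₂ lam₁ lam₂ μ₁ μ₂ : ℝ)
    (hχ₁ : 0 < χ₁) (hχ₂ : 0 < χ₂) (hlam₁ : 0 < lam₁) (hlam₂ : 0 < lam₂)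
    (hμ₁ : 0 < μ₁) (hμ₂ : 0 < μ₂)
    (hlam : lam₂ > lam₁) (hge : χ₂ * lam₂ * μ₂ ≥ χ₁ * lam₁ * μ₁) :
    (∫ s in Set.Ioi (0:ℝ),
        max 0 (-(χ₂ * lam₂ * μ₂ * Real.exp (-lam₂ * s) - χ₁ * lam₁ * μ₁ * Real.exp (-lam₁ * s))))
      = (lam₂ / lam₁ - 1) * (χ₂ * μ₂) *
        ((χ₁ * lam₁ * μ₁ / (χ₂ * lam₂ * μ₂)) ^ (lam₂ / (lam₂ - lam₁))) :=
  stmt_2_general χ₁ χ₂ lam₁ lam₂ μ₁ μ₂ hχ₁ hlam₁ hμ₁ hlam hge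
end

section
/- (Theorem C(iii)) Let c < 2√a. Then there is no traveling wave solution with speed c connecting (a/b, aμ₁/(bλ₁), aμ₂/(bλ₂)) and (0,0,0): there exist no bounded functions U, V₁, V₂ : ℝ → ℝ with U nonnegative and of class C², V₁, V₂ of class C² with bounded first derivatives, satisfying 0 = U'' + cU' + (U·(χ₂V₂ − χ₁V₁)')' + U(a − bU) and 0 = Vᵢ'' + cτVᵢ' − λᵢVᵢ + μᵢU on ℝ (i = 1,2), such that (U,V₁,V₂)(x) → (a/b, aμ₁/(bλ₁), aμ₂/(bλ₂)) as x → −∞ and (U,V₁,V₂)(x) → (0,0,0) as x → +∞. -/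
/-!
With `φ = χ₂V₂ - χ₁V₁`, the `U`-equation is the linear equation `U'' + pU' + qU = 0` with
`p = c + φ'` and `q = φ'' + a - bU`. The signal equations bound `Vᵢ''`, so `Vᵢ → 0` forces
`Vᵢ' → 0` and then `Vᵢ'' → 0`; hence `p → c` and `q → a` at `+∞`. A zero of `U ≥ 0` would be a
double zero, so by uniqueness `U ≡ 0`, contradicting `U → a/b`; thus `U > 0` and `r = U'/U` solves
`r' = -r² - pr - q`. As `U → 0`, `r` is nonpositive somewhere far out, and `c < 2√a` makes the
right-hand side at most `-δ(1 + r²)` whenever `r ≤ 0`. Then `arctan r` decreases at a fixed rate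
forever, which is impossible.
-/

open Filter Set Topology Real

theorem tendsto_deriv_atTop_zero_of_tendsto {f : ℝ → ℝ} {L M : ℝ} (hf : ContDiff ℝ 2 f)
    (hM : ∀ x, |deriv (deriv f) x| ≤ M) (hL : Tendsto f atTop (𝓝 L)) :
    Tendsto (deriv f) atTop (𝓝 0) := by
  have hf₁ : Differentiable ℝ f := hf.differentiable two_ne_zero
  have hf₂ : Differentiable ℝ (deriv f) := hf.differentiable_deriv_two
  have hM₀ : 0 ≤ M := (abs_nonneg _).trans (hM 0)
  have hquot : ∀ x h, 0 < h → |deriv f x| ≤ |f (x + h) - f x| / h + M * h := by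
    intro x h hh
    obtain ⟨ξ, hξ, hslope⟩ := exists_deriv_eq_slope f (lt_add_of_pos_right x hh)
      hf₁.continuous.continuousOn (fun y _ => (hf₁ y).differentiableWithinAt)
    have hlip : |deriv f x - deriv f ξ| ≤ M * |x - ξ| :=
      convex_univ.norm_image_sub_le_of_norm_deriv_le (fun y _ => hf₂ y) (fun y _ => hM y)
        trivial trivial
    rw [add_sub_cancel_left] at hslope
    rw [abs_sub_comm x, abs_of_pos (sub_pos.2 hξ.1)] at hlip
    have hξ' : |deriv f ξ| = |f (x + h) - f x| / h := by rw [hslope, abs_div, abs_of_pos hh]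
    nlinarith [abs_sub_abs_le_abs_sub (deriv f x) (deriv f ξ), hξ.2]
  rw [Metric.tendsto_nhds]
  intro ε hε
  set h := ε / (2 * (M + 1)) with hh_def
  have hh : 0 < h := by positivity
  have hMh : M * h < ε / 2 := by
    rw [hh_def, mul_div_assoc', div_lt_div_iff₀ (by positivity) (by norm_num)]
    nlinarith
  have hdiff : Tendsto (fun x => f (x + h) - f x) atTop (𝓝 0) := by
    simpa using (hL.comp (tendsto_atTop_add_const_right _ h tendsto_id)).sub hL
  filter_upwards [Metric.tendsto_nhds.mp hdiff (ε / 2 * h) (by positivity)] with x hx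
  rw [Real.dist_eq, sub_zero] at hx ⊢
  have : |f (x + h) - f x| / h < ε / 2 := by rwa [div_lt_iff₀ hh]
  linarith [hquot x h hh]

theorem exists_deriv_neg_of_tendsto_atTop {f : ℝ → ℝ} {L : ℝ} (hf : Differentiable ℝ f)
    (hL : Tendsto f atTop (𝓝 L)) {R : ℝ} (hR : L < f R) : ∃ x > R, deriv f x < 0 := by
  obtain ⟨y, hy, hyR⟩ := ((hL.eventually (gt_mem_nhds hR)).and (eventually_gt_atTop R)).exists
  obtain ⟨x, hx, hslope⟩ := exists_deriv_eq_slope f hyR hf.continuous.continuousOn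
    (fun x _ => (hf x).differentiableWithinAt)
  exact ⟨x, hx.1, hslope ▸ div_neg_of_neg_of_pos (by linarith) (by linarith)⟩

theorem false_of_hasDerivAt_le_neg_mul_one_add_sq {r r' : ℝ → ℝ} {x₁ δ : ℝ} (hδ : 0 < δ)
    (hr : ∀ x ≥ x₁, HasDerivAt r (r' x) x) (h₁ : r x₁ ≤ 0)
    (hr' : ∀ x ≥ x₁, r x ≤ 0 → r' x ≤ -δ * (1 + r x ^ 2)) : False := by
  -- `arctan ∘ r` stays below a line of slope `-δ / 2`, yet above `-π / 2`
  set B : ℝ → ℝ := fun x => arctan (r x₁) - δ / 2 * (x - x₁)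
  have hB : ∀ x, HasDerivAt B (-(δ / 2)) x := fun x => by
    simpa using ((hasDerivAt_id x).sub_const x₁).const_mul (δ / 2) |>.const_sub (arctan (r x₁))
  set y := x₁ + 2 * π / δ
  have hy : x₁ ≤ y := le_add_of_nonneg_right (by positivity)
  have hfence := image_le_of_deriv_right_lt_deriv_boundary' (a := x₁) (b := y)
    (f := fun x => arctan (r x)) (B := B)
    (fun x hx => ((hr x hx.1).arctan).continuousAt.continuousWithinAt)
    (fun x hx => ((hr x hx.1).arctan).hasDerivWithinAt) (by simp [B])
    (fun x _ => (hB x).continuousAt.continuousWithinAt) (fun x _ => (hB x).hasDerivWithinAt)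
    (by
      intro x hx hxB
      have hrx : r x ≤ 0 := by
        rw [← arctan_le_arctan_iff, hxB, arctan_zero]
        simp only [B]
        nlinarith [arctan_le_arctan_iff.mpr h₁, arctan_zero, hx.1]
      rw [one_div_mul_eq_div, div_lt_iff₀ (by positivity)]
      nlinarith [hr' x hx.1 hrx, sq_nonneg (r x)])
    ⟨hy, le_rfl⟩
  have hBy : B y = arctan (r x₁) - π := by
    simp only [B, y]; field_simp; ring
  linarith [neg_pi_div_two_lt_arctan (r y), arctan_le_arctan_iff.mpr h₁, arctan_zero, pi_pos]

theorem exists_riccati_bound {a c : ℝ} (ha : 0 < a) (hc : c < 2 * √a) :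
    ∃ ε > 0, ∃ δ > 0, ∀ p q r : ℝ, |p - c| < ε → |q - a| < ε → r ≤ 0 →
      -r ^ 2 - p * r - q ≤ -δ * (1 + r ^ 2) := by
  set k := max c 0
  have hk : k ^ 2 < 4 * a := by
    have h2a : 0 < 2 * √a := by positivity
    have : k < 2 * √a := max_lt hc h2a
    nlinarith [sq_sqrt ha.le, le_max_right c 0]
  -- `ε = δ = η` works once `(1 - η) t² - (k + η) t + (a - 2η)` has negative discriminant
  have hdisc : ∀ᶠ η in 𝓝[>] 0, (k + η) ^ 2 < 4 * (1 - η) * (a - 2 * η) ∧ η < 1 := by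
    have hcont : Tendsto (fun η : ℝ => 4 * (1 - η) * (a - 2 * η) - (k + η) ^ 2) (𝓝 0)
        (𝓝 (4 * a - k ^ 2)) :=
      (by fun_prop : Continuous fun η : ℝ => 4 * (1 - η) * (a - 2 * η) - (k + η) ^ 2).tendsto' _ _
        (by ring)
    refine nhdsWithin_le_nhds ?_
    filter_upwards [hcont.eventually (lt_mem_nhds (sub_pos.2 hk)), gt_mem_nhds one_pos]
      with η h1 h2 using ⟨by linarith, h2⟩
  obtain ⟨η, ⟨hdisc, hη1⟩, hη⟩ := (hdisc.and self_mem_nhdsWithin).exists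
  refine ⟨η, hη, η, hη, fun p q r hp hq hr => ?_⟩
  have hp' : p * -r ≤ (k + η) * -r := by
    gcongr
    · linarith
    · linarith [(abs_lt.mp hp).2, le_max_left c 0]
  have hq' : a - η ≤ q := by linarith [(abs_lt.mp hq).1]
  nlinarith [sq_nonneg (2 * (1 - η) * -r - (k + η))]

theorem lipschitzWith_linearODE_field {α β C : ℝ} (h : |α| + |β| ≤ C) :
    LipschitzWith (1 + C).toNNReal fun y : ℝ × ℝ => (y.2, -(α * y.2) - β * y.1) := by
  refine LipschitzWith.of_dist_le_mul fun y z => ?_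
  have h₁ : |y.1 - z.1| ≤ dist y z := by rw [← Real.dist_eq, Prod.dist_eq]; exact le_max_left _ _
  have h₂ : |y.2 - z.2| ≤ dist y z := by rw [← Real.dist_eq, Prod.dist_eq]; exact le_max_right _ _
  have hC : 0 ≤ C := (add_nonneg (abs_nonneg _) (abs_nonneg _)).trans h
  rw [Real.coe_toNNReal _ (by linarith), Prod.dist_eq, Real.dist_eq, Real.dist_eq]
  refine max_le (by nlinarith [dist_nonneg (x := y) (y := z)]) ?_
  calc |-(α * y.2) - β * y.1 - (-(α * z.2) - β * z.1)|
      = |α * (y.2 - z.2) + β * (y.1 - z.1)| := by rw [← abs_neg]; ring_nf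
    _ ≤ |α| * |y.2 - z.2| + |β| * |y.1 - z.1| := by
      rw [← abs_mul, ← abs_mul]; exact abs_add_le _ _
    _ ≤ (1 + C) * dist y z := by
      nlinarith [abs_nonneg α, abs_nonneg β, dist_nonneg (x := y) (y := z),
        mul_le_mul_of_nonneg_left h₁ (abs_nonneg β), mul_le_mul_of_nonneg_left h₂ (abs_nonneg α)]

structure IsLinearODESolution (p q u : ℝ → ℝ) : Prop where
  differentiable : Differentiable ℝ u
  hasDerivAt_deriv : ∀ x, HasDerivAt (deriv u) (-(p x * deriv u x) - q x * u x) x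

namespace IsLinearODESolution

variable {p q u : ℝ → ℝ}

theorem eq_zero (hu : IsLinearODESolution p q u) (hp : Continuous p) (hq : Continuous q)
    {x₀ : ℝ} (h₀ : u x₀ = 0) (h₀' : deriv u x₀ = 0) : u = 0 := by
  funext t
  obtain ⟨A, B, htAB, hx₀AB⟩ : ∃ A B, t ∈ Ioo A B ∧ x₀ ∈ Ioo A B :=
    ⟨min t x₀ - 1, max t x₀ + 1, by constructor <;> grind, by constructor <;> grind⟩
  obtain ⟨C, hC⟩ := isCompact_Icc.exists_bound_of_continuousOn
    (hp.abs.add hq.abs).continuousOn (s := Icc A B)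
  set v : ℝ → ℝ × ℝ → ℝ × ℝ := fun s y => (y.2, -(p s * y.2) - q s * y.1)
  have hv : ∀ s ∈ Ioo A B, LipschitzOnWith (1 + C).toNNReal (v s) univ := fun s hs =>
    (lipschitzWith_linearODE_field <| (le_abs_self _).trans <| by
      simpa using hC s (Ioo_subset_Icc_self hs)).lipschitzOnWith
  have hsol : ∀ s ∈ Ioo A B, HasDerivAt (fun s => (u s, deriv u s)) (v s (u s, deriv u s)) s ∧
      (u s, deriv u s) ∈ univ :=
    fun s _ => ⟨(hu.differentiable s).hasDerivAt.prodMk (hu.hasDerivAt_deriv s), trivial⟩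
  have hzero : ∀ s ∈ Ioo A B, HasDerivAt (fun _ => (0 : ℝ × ℝ)) (v s 0) s ∧ (0 : ℝ × ℝ) ∈ univ :=
    fun s _ => ⟨(hasDerivAt_const s (0 : ℝ × ℝ)).congr_deriv (by simp [v, Prod.mk_zero_zero]),
      trivial⟩
  exact congrArg Prod.fst (ODE_solution_unique_of_mem_Ioo hv hx₀AB hsol hzero
    (by simp [h₀, h₀']) htAB)

theorem eq_zero_of_nonneg (hu : IsLinearODESolution p q u) (hp : Continuous p)
    (hq : Continuous q) (hnn : ∀ x, 0 ≤ u x) {x₀ : ℝ} (h₀ : u x₀ = 0) : u = 0 :=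
  hu.eq_zero hp hq h₀ <| IsLocalMin.deriv_eq_zero <|
    Eventually.of_forall fun y => h₀ ▸ hnn y

theorem hasDerivAt_logDeriv (hu : IsLinearODESolution p q u) {x : ℝ} (hx : u x ≠ 0) :
    HasDerivAt (fun y => deriv u y / u y)
      (-(deriv u x / u x) ^ 2 - p x * (deriv u x / u x) - q x) x := by
  refine ((hu.hasDerivAt_deriv x).div (hu.differentiable x).hasDerivAt hx).congr_deriv ?_
  field_simp
  ring

theorem not_tendsto_atTop_zero (hu : IsLinearODESolution p q u) {a c : ℝ} (ha : 0 < a)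
    (hc : c < 2 * √a) (hp : Tendsto p atTop (𝓝 c)) (hq : Tendsto q atTop (𝓝 a))
    (hpos : ∀ x, 0 < u x) : ¬ Tendsto u atTop (𝓝 0) := by
  intro hu₀
  obtain ⟨ε, hε, δ, hδ, hbound⟩ := exists_riccati_bound ha hc
  obtain ⟨R, hR⟩ := eventually_atTop.mp <|
    (Metric.tendsto_nhds.mp hp ε hε).and (Metric.tendsto_nhds.mp hq ε hε)
  obtain ⟨x₁, hx₁R, hx₁⟩ := exists_deriv_neg_of_tendsto_atTop hu.differentiable hu₀ (hpos R)
  exact false_of_hasDerivAt_le_neg_mul_one_add_sq hδ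
    (fun x _ => hu.hasDerivAt_logDeriv (hpos x).ne')
    (div_nonpos_of_nonpos_of_nonneg hx₁.le (hpos x₁).le)
    (fun x hx hrx => hbound _ _ _ (hR x (by linarith)).1 (hR x (by linarith)).2 hrx)

end IsLinearODESolution

theorem isLinearODESolution_of_chemotaxis_eq {U φ : ℝ → ℝ} {a b c : ℝ} (hU : ContDiff ℝ 2 U)
    (hφ : ContDiff ℝ 2 φ)
    (heq : ∀ x, 0 = deriv (deriv U) x + c * deriv U x + deriv (fun y => U y * deriv φ y) x +
      U x * (a - b * U x)) :
    IsLinearODESolution (fun x => c + deriv φ x) (fun x => deriv (deriv φ) x + a - b * U x) U := by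
  refine ⟨hU.differentiable two_ne_zero, fun x => ?_⟩
  have hprod : deriv (fun y => U y * deriv φ y) x =
      deriv U x * deriv φ x + U x * deriv (deriv φ) x :=
    ((hU.differentiable two_ne_zero x).hasDerivAt.mul
      (hφ.differentiable_deriv_two x).hasDerivAt).deriv
  refine (hU.differentiable_deriv_two x).hasDerivAt.congr_deriv ?_
  linear_combination -heq x - hprod

theorem abs_deriv_deriv_le_of_signal_eq {V U : ℝ → ℝ} {k l m CV CU CV' : ℝ}
    (heq : ∀ x, 0 = deriv (deriv V) x + k * deriv V x - l * V x + m * U x)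
    (hV : ∀ x, |V x| ≤ CV) (hU : ∀ x, |U x| ≤ CU) (hV' : ∀ x, |deriv V x| ≤ CV') (x : ℝ) :
    |deriv (deriv V) x| ≤ |l| * CV + |m| * CU + |k| * CV' := by
  rw [show deriv (deriv V) x = l * V x - m * U x - k * deriv V x by linarith [heq x]]
  calc |l * V x - m * U x - k * deriv V x| ≤ |l * V x| + |m * U x| + |k * deriv V x| := by
        linarith [abs_sub (l * V x - m * U x) (k * deriv V x), abs_sub (l * V x) (m * U x)]
    _ = |l| * |V x| + |m| * |U x| + |k| * |deriv V x| := by simp only [abs_mul]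
    _ ≤ |l| * CV + |m| * CU + |k| * CV' := by gcongr <;> simp_all

theorem tendsto_derivs_of_signal_eq {V U : ℝ → ℝ} {k l m : ℝ} (hV : ContDiff ℝ 2 V)
    (heq : ∀ x, 0 = deriv (deriv V) x + k * deriv V x - l * V x + m * U x)
    (hVb : ∃ C, ∀ x, |V x| ≤ C) (hUb : ∃ C, ∀ x, |U x| ≤ C) (hV'b : ∃ C, ∀ x, |deriv V x| ≤ C)
    (hV₀ : Tendsto V atTop (𝓝 0)) (hU₀ : Tendsto U atTop (𝓝 0)) :
    Tendsto (deriv V) atTop (𝓝 0) ∧ Tendsto (deriv (deriv V)) atTop (𝓝 0) := by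
  obtain ⟨CV, hCV⟩ := hVb
  obtain ⟨CU, hCU⟩ := hUb
  obtain ⟨CV', hCV'⟩ := hV'b
  have hV' := tendsto_deriv_atTop_zero_of_tendsto hV
    (abs_deriv_deriv_le_of_signal_eq heq hCV hCU hCV') hV₀
  refine ⟨hV', ?_⟩
  have := ((hV₀.const_mul l).sub (hU₀.const_mul m)).sub (hV'.const_mul k)
  simp only [mul_zero, sub_zero] at this
  exact this.congr fun x => by linarith [heq x]

theorem stmt_10_general (a b c τ χ₁ χ₂ lam₁ lam₂ μ₁ μ₂ : ℝ)
    (ha : 0 < a) (hb : 0 < b)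
    (hc : c < 2 * Real.sqrt a) :
    ¬ ∃ U V₁ V₂ : ℝ → ℝ,
      (∃ C, ∀ x, |U x| ≤ C) ∧ (∃ C, ∀ x, |V₁ x| ≤ C) ∧ (∃ C, ∀ x, |V₂ x| ≤ C) ∧
      (∀ x, 0 ≤ U x) ∧ ContDiff ℝ 2 U ∧ ContDiff ℝ 2 V₁ ∧ ContDiff ℝ 2 V₂ ∧
      (∃ C, ∀ x, |deriv V₁ x| ≤ C) ∧ (∃ C, ∀ x, |deriv V₂ x| ≤ C) ∧
      (∀ x : ℝ, 0 = deriv (deriv U) x + c * deriv U x +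
          deriv (fun y => U y * deriv (fun z => χ₂ * V₂ z - χ₁ * V₁ z) y) x +
          U x * (a - b * U x)) ∧
      (∀ x : ℝ, 0 = deriv (deriv V₁) x + c * τ * deriv V₁ x - lam₁ * V₁ x + μ₁ * U x) ∧
      (∀ x : ℝ, 0 = deriv (deriv V₂) x + c * τ * deriv V₂ x - lam₂ * V₂ x + μ₂ * U x) ∧
      Tendsto U atBot (nhds (a / b)) ∧
      Tendsto V₁ atBot (nhds (a * μ₁ / (b * lam₁))) ∧
      Tendsto V₂ atBot (nhds (a * μ₂ / (b * lam₂))) ∧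
      Tendsto U atTop (nhds 0) ∧
      Tendsto V₁ atTop (nhds 0) ∧
      Tendsto V₂ atTop (nhds 0) := by
  rintro ⟨U, V₁, V₂, hU_bdd, hV₁_bdd, hV₂_bdd, hU_nonneg, hU, hV₁, hV₂, hV₁'_bdd, hV₂'_bdd,
    hU_eq, hV₁_eq, hV₂_eq, hU_bot, -, -, hU_top, hV₁_top, hV₂_top⟩
  set φ : ℝ → ℝ := fun z => χ₂ * V₂ z - χ₁ * V₁ z
  have hφ : ContDiff ℝ 2 φ := (contDiff_const.mul hV₂).sub (contDiff_const.mul hV₁)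
  have hsol := isLinearODESolution_of_chemotaxis_eq hU hφ hU_eq
  obtain ⟨hV₁', hV₁''⟩ :=
    tendsto_derivs_of_signal_eq hV₁ hV₁_eq hV₁_bdd hU_bdd hV₁'_bdd hV₁_top hU_top
  obtain ⟨hV₂', hV₂''⟩ :=
    tendsto_derivs_of_signal_eq hV₂ hV₂_eq hV₂_bdd hU_bdd hV₂'_bdd hV₂_top hU_top
  have hφ' : deriv φ = fun x => χ₂ * deriv V₂ x - χ₁ * deriv V₁ x := funext fun x =>
    (((hV₂.differentiable two_ne_zero x).hasDerivAt.const_mul χ₂).sub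
      ((hV₁.differentiable two_ne_zero x).hasDerivAt.const_mul χ₁)).deriv
  have hφ'' : deriv (deriv φ) = fun x => χ₂ * deriv (deriv V₂) x - χ₁ * deriv (deriv V₁) x := by
    rw [hφ']
    exact funext fun x => (((hV₂.differentiable_deriv_two x).hasDerivAt.const_mul χ₂).sub
      ((hV₁.differentiable_deriv_two x).hasDerivAt.const_mul χ₁)).deriv
  have hpos : ∀ x, 0 < U x := by
    by_contra! ⟨x₀, hx₀⟩
    have hU₀ := hsol.eq_zero_of_nonneg (continuous_const.add (hφ.continuous_deriv one_le_two))
      ((((hφ.deriv' (n := 1)).continuous_deriv_one).add continuous_const).sub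
        (continuous_const.mul hU.continuous)) hU_nonneg
      (le_antisymm hx₀ (hU_nonneg x₀))
    rw [hU₀] at hU_bot
    exact (div_pos ha hb).ne' (tendsto_nhds_unique hU_bot tendsto_const_nhds)
  refine hsol.not_tendsto_atTop_zero ha hc ?_ ?_ hpos hU_top
  · simpa [hφ'] using tendsto_const_nhds.add ((hV₂'.const_mul χ₂).sub (hV₁'.const_mul χ₁))
  · simpa [hφ''] using (((hV₂''.const_mul χ₂).sub (hV₁''.const_mul χ₁)).add_const a).sub
      (hU_top.const_mul b)

/-- Theorem C(iii): there is no traveling wave solution with speed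
c < 2√a connecting (a/b, aμ₁/(bλ₁), aμ₂/(bλ₂)) and (0,0,0). -/
theorem stmt_10 (a b c τ χ₁ χ₂ lam₁ lam₂ μ₁ μ₂ : ℝ)
    (ha : 0 < a) (hb : 0 < b) (hτ : 0 < τ)
    (hχ₁ : 0 < χ₁) (hχ₂ : 0 < χ₂) (hlam₁ : 0 < lam₁) (hlam₂ : 0 < lam₂)
    (hμ₁ : 0 < μ₁) (hμ₂ : 0 < μ₂)
    (hc : c < 2 * Real.sqrt a) :
    ¬ ∃ U V₁ V₂ : ℝ → ℝ,
      (∃ C, ∀ x, |U x| ≤ C) ∧ (∃ C, ∀ x, |V₁ x| ≤ C) ∧ (∃ C, ∀ x, |V₂ x| ≤ C) ∧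
      (∀ x, 0 ≤ U x) ∧ ContDiff ℝ 2 U ∧ ContDiff ℝ 2 V₁ ∧ ContDiff ℝ 2 V₂ ∧
      (∃ C, ∀ x, |deriv V₁ x| ≤ C) ∧ (∃ C, ∀ x, |deriv V₂ x| ≤ C) ∧
      (∀ x : ℝ, 0 = deriv (deriv U) x + c * deriv U x +
          deriv (fun y => U y * deriv (fun z => χ₂ * V₂ z - χ₁ * V₁ z) y) x +
          U x * (a - b * U x)) ∧
      (∀ x : ℝ, 0 = deriv (deriv V₁) x + c * τ * deriv V₁ x - lam₁ * V₁ x + μ₁ * U x) ∧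
      (∀ x : ℝ, 0 = deriv (deriv V₂) x + c * τ * deriv V₂ x - lam₂ * V₂ x + μ₂ * U x) ∧
      Tendsto U atBot (nhds (a / b)) ∧
      Tendsto V₁ atBot (nhds (a * μ₁ / (b * lam₁))) ∧
      Tendsto V₂ atBot (nhds (a * μ₂ / (b * lam₂))) ∧
      Tendsto U atTop (nhds 0) ∧
      Tendsto V₁ atTop (nhds 0) ∧
      Tendsto V₂ atTop (nhds 0) :=
  stmt_10_general a b c τ χ₁ χ₂ lam₁ lam₂ μ₁ μ₂ ha hb hc
end

section
/- Let c ≥ 0, τ > 0, λ > 0, μ' > 0, and let u : ℝ → ℝ be bounded, uniformly continuous and nonnegative. Define V(x) := μ' ∫₀^∞ ∫_ℝ (e^{−λs}/√(4πs)) · e^{−(x−z)²/(4s)} · u(z + τcs) dz ds. Then V is twice continuously differentiable and bounded, V ≥ 0, V satisfies V''(x) + cτV'(x) − λV(x) + μ'u(x) = 0 for all x ∈ ℝ, and sup_{x∈ℝ} |V(x)| ≤ (μ'/λ) · sup_{x∈ℝ} |u(x)|. -/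
/-!
Substituting `z = w - τ c s` and exchanging the integrals (Fubini: the heat kernel has mass one
and `u` is bounded) writes `V` as the convolution of `u` with the Laplace transform in `s` of the
heat kernel with drift. Completing the square and the Cauchy–Schlömilch substitution
`t ↦ A t - Q / t` evaluate that transform: writing `λ = α β` and `τ c = α - β` with `α, β > 0`, it
is `e^{-α y} / (α + β)` for `y ≥ 0` and `e^{β y} / (α + β)` for `y < 0`. Hence
`V = μ' / (α + β) · (e^{-α x} ∫_{-∞}^x e^{α z} u + e^{β x} ∫_x^∞ e^{-β z} u)`, which is `C²` by the
fundamental theorem of calculus and solves the equation because `e^{-α x}` and `e^{β x}` span the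
kernel of `d² + (α - β) d - α β`. The sup bound follows directly from the mass of the heat kernel
and `∫₀^∞ e^{-λ s} ds = 1 / λ`.
-/

open MeasureTheory Set Real

section CauchySchlomilch

lemma hasDerivAt_mul_sub_div (A Q : ℝ) {t : ℝ} (ht : t ≠ 0) :
    HasDerivAt (fun t => A * t - Q / t) (A + Q / t ^ 2) t := by
  have h : HasDerivAt (fun t => A * t - Q * t⁻¹) (A * 1 - Q * -(t ^ 2)⁻¹) t :=
    ((hasDerivAt_id t).const_mul A).sub ((hasDerivAt_inv ht).const_mul Q)
  simpa [div_eq_mul_inv] using h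

variable {A Q : ℝ}

lemma strictMonoOn_mul_sub_div (hA : 0 < A) (hQ : 0 < Q) :
    StrictMonoOn (fun t => A * t - Q / t) (Ioi 0) := fun _ ha _ _ hab =>
  sub_lt_sub (mul_lt_mul_of_pos_left hab hA) (div_lt_div_of_pos_left hQ ha hab)

lemma image_mul_sub_div_Ioi (hA : 0 < A) (hQ : 0 < Q) :
    (fun t => A * t - Q / t) '' Ioi 0 = univ := by
  refine eq_univ_of_forall fun y => ?_
  set r := √(y ^ 2 + 4 * A * Q)
  have hr : r ^ 2 = y ^ 2 + 4 * A * Q := sq_sqrt (by positivity)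
  have hyr : 0 < y + r := by nlinarith [sqrt_nonneg (y ^ 2 + 4 * A * Q)]
  refine ⟨(y + r) / (2 * A), div_pos hyr (by positivity), ?_⟩
  field_simp
  linear_combination hr

lemma integrableOn_add_div_sq_mul_comp_mul_sub_div_iff (hA : 0 < A) (hQ : 0 < Q) (g : ℝ → ℝ) :
    IntegrableOn (fun t => (A + Q / t ^ 2) * g (A * t - Q / t)) (Ioi 0) ↔ Integrable g := by
  rw [← integrableOn_univ, ← image_mul_sub_div_Ioi hA hQ,
    integrableOn_image_iff_integrableOn_abs_deriv_smul measurableSet_Ioi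
      (fun t ht => (hasDerivAt_mul_sub_div A Q (ne_of_gt ht)).hasDerivWithinAt)
      (strictMonoOn_mul_sub_div hA hQ).injOn]
  refine integrableOn_congr_fun (fun t _ => ?_) measurableSet_Ioi
  rw [smul_eq_mul, abs_of_pos (by positivity)]

lemma integral_add_div_sq_mul_comp_mul_sub_div (hA : 0 < A) (hQ : 0 < Q) (g : ℝ → ℝ) :
    ∫ t in Ioi 0, (A + Q / t ^ 2) * g (A * t - Q / t) = ∫ y, g y := by
  have habs : EqOn (fun t => |A + Q / t ^ 2| • g (A * t - Q / t))
      (fun t => (A + Q / t ^ 2) * g (A * t - Q / t)) (Ioi 0) := fun t _ => by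
    dsimp only
    rw [smul_eq_mul, abs_of_pos (by positivity)]
  rw [← setIntegral_congr_fun measurableSet_Ioi habs,
    ← integral_image_eq_integral_abs_deriv_smul measurableSet_Ioi
      (fun t ht => (hasDerivAt_mul_sub_div A Q (ne_of_gt ht)).hasDerivWithinAt)
      (strictMonoOn_mul_sub_div hA hQ).injOn,
    image_mul_sub_div_Ioi hA hQ, setIntegral_univ]

lemma integral_div_sq_mul_comp_mul_sub_div (hA : 0 < A) (hQ : 0 < Q) (g : ℝ → ℝ) :
    ∫ t in Ioi 0, Q / t ^ 2 * g (A * t - Q / t) = ∫ t in Ioi 0, A * g (Q / t - A * t) := by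
  set φ : ℝ → ℝ := fun t => Q / A / t
  have hφ : Function.Involutive φ := fun t => div_div_cancel₀ (by positivity)
  have himage : φ '' Ioi 0 = Ioi 0 := by
    rw [hφ.image_eq_preimage_symm]
    ext t
    simp [φ, hA, hQ]
  have hφ' : ∀ t ∈ Ioi (0 : ℝ), HasDerivWithinAt φ (-(Q / A) / t ^ 2) (Ioi 0) t := fun t ht =>
    (by simpa [φ, div_eq_mul_inv] using (hasDerivAt_inv (ne_of_gt ht)).const_mul (Q / A) :
      HasDerivAt φ _ t).hasDerivWithinAt
  have h := integral_image_eq_integral_abs_deriv_smul measurableSet_Ioi hφ' hφ.injective.injOn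
    (fun t => A * g (Q / t - A * t))
  rw [himage] at h
  rw [h]
  refine setIntegral_congr_fun measurableSet_Ioi fun t (ht : 0 < t) => ?_
  simp only [φ, smul_eq_mul, abs_div, abs_neg, abs_of_pos (div_pos hQ hA), abs_pow, abs_of_pos ht]
  field_simp

/-- The Cauchy–Schlömilch transformation. -/
theorem integral_comp_mul_sub_div_Ioi {g : ℝ → ℝ} (hg : Continuous g) (hgi : Integrable g)
    (heven : ∀ y, g (-y) = g y) (hA : 0 < A) (hQ : 0 < Q) :
    ∫ t in Ioi 0, g (A * t - Q / t) = (∫ y, g y) / (2 * A) := by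
  have hdom := (integrableOn_add_div_sq_mul_comp_mul_sub_div_iff hA hQ fun y => |g y|).2 hgi.abs
  have hcont : ContinuousOn (fun t => g (A * t - Q / t)) (Ioi 0) :=
    hg.comp_continuousOn (by fun_prop (disch := exact fun t (ht : 0 < t) => ht.ne'))
  have hint : ∀ c : ℝ → ℝ, ContinuousOn c (Ioi 0) → (∀ t ∈ Ioi (0 : ℝ), |c t| ≤ A + Q / t ^ 2) →
      IntegrableOn (fun t => c t * g (A * t - Q / t)) (Ioi 0) := fun c hc hcle =>
    hdom.mono' ((hc.mul hcont).aestronglyMeasurable measurableSet_Ioi) <|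
      (ae_restrict_iff' measurableSet_Ioi).2 <| Filter.Eventually.of_forall fun t ht => by
        rw [norm_mul, Real.norm_eq_abs, Real.norm_eq_abs]
        exact mul_le_mul_of_nonneg_right (hcle t ht) (abs_nonneg _)
  have hintA := hint (fun _ => A) continuousOn_const fun t (ht : 0 < t) => by
    rw [abs_of_pos hA]
    have : 0 ≤ Q / t ^ 2 := by positivity
    linarith
  have hintQ := hint (fun t => Q / t ^ 2)
    (by fun_prop (disch := exact fun t (ht : 0 < t) => by positivity)) fun t (ht : 0 < t) => by
      rw [abs_of_pos (by positivity)]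
      linarith
  -- `t ↦ Q / (A t)` exchanges the two parts of the weight `A + Q / t²`, so each gives half.
  have hsplit := integral_add_div_sq_mul_comp_mul_sub_div hA hQ g
  simp only [add_mul] at hsplit
  rw [integral_add hintA hintQ, integral_div_sq_mul_comp_mul_sub_div hA hQ] at hsplit
  simp only [← neg_sub (A * _), heven, integral_const_mul] at hsplit
  rw [← hsplit]
  field_simp
  ring

lemma integral_exp_neg_sq_add_sq_div (hA : 0 < A) (hQ : 0 ≤ Q) :
    ∫ t in Ioi 0, exp (-((A * t) ^ 2 + (Q / t) ^ 2)) = √π / (2 * A) * exp (-(2 * A * Q)) := by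
  rcases hQ.eq_or_lt with rfl | hQ
  · have hQ0 : ∀ t, exp (-((A * t) ^ 2 + (0 / t) ^ 2)) = exp (-A ^ 2 * t ^ 2) := fun t => by
      congr 1; ring
    simp_rw [hQ0, integral_gaussian_Ioi, sqrt_div pi_pos.le, sqrt_sq hA.le]
    simp only [mul_zero, neg_zero, exp_zero, mul_one]
    ring
  have hsq : ∀ t ∈ Ioi (0 : ℝ), exp (-((A * t) ^ 2 + (Q / t) ^ 2))
      = exp (-(2 * A * Q)) * exp (-(A * t - Q / t) ^ 2) := fun t (ht : 0 < t) => by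
    rw [← exp_add]
    congr 1
    field_simp
    ring
  have hgauss : ∫ y, exp (-y ^ 2) = √π := by simpa using integral_gaussian 1
  rw [setIntegral_congr_fun measurableSet_Ioi hsq, integral_const_mul,
    integral_comp_mul_sub_div_Ioi (g := fun y => exp (-y ^ 2)) (by fun_prop)
      (by simpa using integrable_exp_neg_mul_sq one_pos) (fun y => by rw [neg_sq]) hA hQ, hgauss]
  ring

end CauchySchlomilch

/-- The fundamental solution of `∂ₛ = ∂ᵧ²`, i.e. the density of `𝓝(0, 2 s)`. -/
noncomputable def heatKernel (s y : ℝ) : ℝ := exp (-y ^ 2 / (4 * s)) / √(4 * π * s)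

lemma heatKernel_nonneg (s y : ℝ) : 0 ≤ heatKernel s y := by
  unfold heatKernel; positivity

lemma heatKernel_eq_gaussianPDFReal {s : ℝ} (hs : 0 ≤ s) :
    heatKernel s = ProbabilityTheory.gaussianPDFReal 0 (2 * s).toNNReal := by
  ext y
  rw [heatKernel, ProbabilityTheory.gaussianPDFReal, Real.coe_toNNReal _ (by positivity)]
  ring_nf

lemma integrable_heatKernel {s : ℝ} (hs : 0 ≤ s) : Integrable (heatKernel s) := by
  rw [heatKernel_eq_gaussianPDFReal hs]
  exact ProbabilityTheory.integrable_gaussianPDFReal _ _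

lemma integral_heatKernel {s : ℝ} (hs : 0 < s) : ∫ y, heatKernel s y = 1 := by
  rw [heatKernel_eq_gaussianPDFReal hs.le]
  exact ProbabilityTheory.integral_gaussianPDFReal_eq_one _ (by simpa using hs)

lemma integral_exp_mul_heatKernel {κ : ℝ} (hκ : 0 < κ) (y : ℝ) :
    ∫ s in Ioi 0, exp (-κ ^ 2 * s) * heatKernel s y = exp (-(κ * |y|)) / (2 * κ) := by
  rw [← integral_comp_rpow_Ioi_of_pos (p := 2) two_pos]
  have hpt : ∀ t ∈ Ioi (0 : ℝ), (2 * t ^ ((2 : ℝ) - 1)) • (exp (-κ ^ 2 * t ^ (2 : ℝ)) *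
      heatKernel (t ^ (2 : ℝ)) y) = (√π)⁻¹ * exp (-((κ * t) ^ 2 + (|y| / 2 / t) ^ 2)) :=
    fun t (ht : 0 < t) => by
      have hsqrt : √(4 * π * t ^ 2) = 2 * t * √π := by
        rw [show 4 * π * t ^ 2 = (2 * t) ^ 2 * π by ring, sqrt_mul (by positivity),
          sqrt_sq (by positivity)]
      rw [show (2 : ℝ) - 1 = 1 by norm_num, rpow_one, rpow_two, smul_eq_mul, heatKernel, hsqrt,
        mul_div_assoc', ← exp_add]
      field_simp
      rw [sq_abs]
      ring_nf
  rw [setIntegral_congr_fun measurableSet_Ioi hpt, integral_const_mul,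
    integral_exp_neg_sq_add_sq_div hκ (by positivity)]
  field_simp

lemma exp_mul_heatKernel_add_mul (lam b y : ℝ) {s : ℝ} (hs : s ≠ 0) :
    exp (-lam * s) * heatKernel s (y + b * s)
      = exp (-(b * y / 2)) * (exp (-(lam + b ^ 2 / 4) * s) * heatKernel s y) := by
  simp only [heatKernel, mul_div_assoc', ← exp_add]
  congr 2
  field_simp
  ring

lemma integral_exp_mul_heatKernel_add_mul {α β : ℝ} (hα : 0 < α) (hβ : 0 < β) (y : ℝ) :
    ∫ s in Ioi 0, exp (-(α * β) * s) * heatKernel s (y + (α - β) * s)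
      = exp (-((α - β) * y + (α + β) * |y|) / 2) / (α + β) := by
  have hκ : α * β + (α - β) ^ 2 / 4 = ((α + β) / 2) ^ 2 := by ring
  rw [setIntegral_congr_fun measurableSet_Ioi fun s (hs : 0 < s) =>
      exp_mul_heatKernel_add_mul (α * β) (α - β) y hs.ne', integral_const_mul, hκ,
    integral_exp_mul_heatKernel (by positivity), mul_div_assoc', ← exp_add]
  congr 2 <;> ring

section HalfLineIntegral

variable {E : Type*} [NormedAddCommGroup E] [NormedSpace ℝ E] [CompleteSpace E] {f : ℝ → E}

lemma hasDerivAt_integral_Iic (hf : Continuous f) (hint : ∀ x, IntegrableOn f (Iic x)) (x : ℝ) :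
    HasDerivAt (fun x => ∫ z in Iic x, f z) (f x) x := by
  have h : (fun x => ∫ z in Iic x, f z) = fun x => (∫ z in Iic 0, f z) + ∫ z in 0..x, f z :=
    funext fun x => by rw [← intervalIntegral.integral_Iic_sub_Iic (hint 0) (hint x)]; abel
  rw [h]
  exact (hf.integral_hasStrictDerivAt 0 x).hasDerivAt.const_add _

lemma hasDerivAt_integral_Ioi (hf : Continuous f) (hint : ∀ x, IntegrableOn f (Ioi x)) (x : ℝ) :
    HasDerivAt (fun x => ∫ z in Ioi x, f z) (-f x) x := by
  have h : (fun x => ∫ z in Ioi x, f z) = fun x => (∫ z in Ioi 0, f z) - ∫ z in 0..x, f z :=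
    funext fun x => by rw [← intervalIntegral.integral_Ioi_sub_Ioi' (hint 0) (hint x)]; abel
  rw [h]
  exact (hf.integral_hasStrictDerivAt 0 x).hasDerivAt.const_sub _

end HalfLineIntegral

section GreenComb

variable {α β M : ℝ} {u : ℝ → ℝ}

/-- Variation of constants for `d² + (α - β) d - α β`, whose kernel is spanned by `exp (-α x)`
and `exp (β x)`. -/
noncomputable def greenComb (α β : ℝ) (u : ℝ → ℝ) (p q x : ℝ) : ℝ :=
  p * exp (-α * x) * (∫ z in Iic x, exp (α * z) * u z) +
    q * exp (β * x) * ∫ z in Ioi x, exp (-β * z) * u z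

lemma integrableOn_exp_mul_mul_Iic (hα : 0 < α) (hu : AEStronglyMeasurable u)
    (hM : ∀ z, |u z| ≤ M) (x : ℝ) : IntegrableOn (fun z => exp (α * z) * u z) (Iic x) :=
  (integrableOn_exp_mul_Iic hα x).mul_bdd hu.restrict (ae_of_all _ hM)

lemma integrableOn_exp_mul_mul_Ioi (hβ : β < 0) (hu : AEStronglyMeasurable u)
    (hM : ∀ z, |u z| ≤ M) (x : ℝ) : IntegrableOn (fun z => exp (β * z) * u z) (Ioi x) :=
  (integrableOn_exp_mul_Ioi hβ x).mul_bdd hu.restrict (ae_of_all _ hM)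

lemma hasDerivAt_greenComb (hα : 0 < α) (hβ : 0 < β) (hu : Continuous u) (hM : ∀ z, |u z| ≤ M)
    (p q x : ℝ) :
    HasDerivAt (greenComb α β u p q) (greenComb α β u (-α * p) (β * q) x + (p - q) * u x) x := by
  have hL := hasDerivAt_integral_Iic (by fun_prop)
    (integrableOn_exp_mul_mul_Iic hα hu.aestronglyMeasurable hM) x
  have hR := hasDerivAt_integral_Ioi (by fun_prop)
    (integrableOn_exp_mul_mul_Ioi (neg_neg_of_pos hβ) hu.aestronglyMeasurable hM) x
  have hEα : HasDerivAt (fun x => exp (-α * x)) (exp (-α * x) * (-α * 1)) x :=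
    ((hasDerivAt_id x).const_mul (-α)).exp
  have hEβ : HasDerivAt (fun x => exp (β * x)) (exp (β * x) * (β * 1)) x :=
    ((hasDerivAt_id x).const_mul β).exp
  have h := ((hEα.const_mul p).mul hL).add ((hEβ.const_mul q).mul hR)
  have hα1 : exp (-α * x) * exp (α * x) = 1 := by rw [← exp_add]; simp
  have hβ1 : exp (β * x) * exp (-β * x) = 1 := by rw [← exp_add]; simp
  refine h.congr_deriv ?_
  simp only [greenComb]
  linear_combination p * u x * hα1 - q * u x * hβ1

lemma deriv_greenComb (hα : 0 < α) (hβ : 0 < β) (hu : Continuous u) (hM : ∀ z, |u z| ≤ M)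
    (p q : ℝ) :
    deriv (greenComb α β u p q) = fun x => greenComb α β u (-α * p) (β * q) x + (p - q) * u x :=
  funext fun x => (hasDerivAt_greenComb hα hβ hu hM p q x).deriv

lemma deriv_greenComb_self (hα : 0 < α) (hβ : 0 < β) (hu : Continuous u) (hM : ∀ z, |u z| ≤ M)
    (p : ℝ) : deriv (greenComb α β u p p) = greenComb α β u (-α * p) (β * p) := by
  simp [deriv_greenComb hα hβ hu hM]

lemma deriv_deriv_greenComb_self (hα : 0 < α) (hβ : 0 < β) (hu : Continuous u)
    (hM : ∀ z, |u z| ≤ M) (p x : ℝ) :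
    deriv (deriv (greenComb α β u p p)) x = α * β * greenComb α β u p p x
      - (α - β) * deriv (greenComb α β u p p) x - (α + β) * p * u x := by
  rw [deriv_greenComb_self hα hβ hu hM, deriv_greenComb hα hβ hu hM]
  simp only [greenComb]
  ring

lemma contDiff_two_greenComb_self (hα : 0 < α) (hβ : 0 < β) (hu : Continuous u)
    (hM : ∀ z, |u z| ≤ M) (p : ℝ) : ContDiff ℝ 2 (greenComb α β u p p) := by
  have hdiff : ∀ p q, Differentiable ℝ (greenComb α β u p q) := fun p q x =>
    (hasDerivAt_greenComb hα hβ hu hM p q x).differentiableAt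
  rw [show (2 : WithTop ℕ∞) = 1 + 1 from rfl, contDiff_succ_iff_deriv,
    deriv_greenComb_self hα hβ hu hM, contDiff_one_iff_deriv, deriv_greenComb hα hβ hu hM]
  exact ⟨hdiff p p, by simp, hdiff _ _, (hdiff _ _).continuous.add (continuous_const.mul hu)⟩

lemma integral_exp_abs_mul_eq_greenComb (hα : 0 < α) (hβ : 0 < β) (hu : Continuous u)
    (hM : ∀ z, |u z| ≤ M) (x : ℝ) :
    ∫ w, exp (-((α - β) * (x - w) + (α + β) * |x - w|) / 2) * u w = greenComb α β u 1 1 x := by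
  have hIic : EqOn (fun w => exp (-((α - β) * (x - w) + (α + β) * |x - w|) / 2) * u w)
      (fun w => exp (-α * x) * (exp (α * w) * u w)) (Iic x) := fun w (hw : w ≤ x) => by
    dsimp only
    rw [abs_of_nonneg (sub_nonneg.2 hw), ← mul_assoc, ← exp_add]
    congr 2; ring
  have hIoi : EqOn (fun w => exp (-((α - β) * (x - w) + (α + β) * |x - w|) / 2) * u w)
      (fun w => exp (β * x) * (exp (-β * w) * u w)) (Ioi x) := fun w (hw : x < w) => by
    dsimp only
    rw [abs_of_neg (sub_neg.2 hw), ← mul_assoc, ← exp_add]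
    congr 2; ring
  have hL := integrableOn_exp_mul_mul_Iic hα hu.aestronglyMeasurable hM x
  have hR := integrableOn_exp_mul_mul_Ioi (neg_neg_of_pos hβ) hu.aestronglyMeasurable hM x
  rw [← intervalIntegral.integral_Iic_add_Ioi
      ((integrableOn_congr_fun hIic measurableSet_Iic).2 (hL.const_mul _))
      ((integrableOn_congr_fun hIoi measurableSet_Ioi).2 (hR.const_mul _)),
    setIntegral_congr_fun measurableSet_Iic hIic, setIntegral_congr_fun measurableSet_Ioi hIoi,
    integral_const_mul, integral_const_mul, greenComb, one_mul, one_mul]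

end GreenComb

section HeatIntegral

variable {M : ℝ} {u : ℝ → ℝ}

lemma integral_abs_heatKernel_sub_mul_le {s : ℝ} (hs : 0 < s) (m : ℝ) {v : ℝ → ℝ}
    (hv : ∀ z, |v z| ≤ M) : ∫ z, |heatKernel s (m - z) * v z| ≤ M :=
  calc ∫ z, |heatKernel s (m - z) * v z|
      ≤ ∫ z, heatKernel s (m - z) * M := by
        refine integral_mono_of_nonneg (ae_of_all _ fun z => abs_nonneg _)
          (((integrable_heatKernel hs.le).comp_sub_left m).mul_const M) (ae_of_all _ fun z => ?_)
        dsimp only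
        rw [abs_mul, abs_of_nonneg (heatKernel_nonneg _ _)]
        exact mul_le_mul_of_nonneg_left (hv z) (heatKernel_nonneg _ _)
    _ = M := by rw [integral_mul_const, integral_sub_left_eq_self, integral_heatKernel hs, one_mul]

lemma abs_integral_integral_exp_mul_heatKernel_le {lam : ℝ} (hlam : 0 < lam) (b x : ℝ)
    (hM : ∀ z, |u z| ≤ M) :
    |∫ s in Ioi 0, ∫ z, exp (-lam * s) * heatKernel s (x - z) * u (z + b * s)| ≤ M / lam := by
  have hbound : ∀ s ∈ Ioi (0 : ℝ),
      ‖∫ z, exp (-lam * s) * heatKernel s (x - z) * u (z + b * s)‖ ≤ M * exp (-lam * s) :=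
    fun s (hs : 0 < s) => by
      simp only [mul_assoc, integral_const_mul, norm_mul, Real.norm_eq_abs, abs_exp]
      rw [mul_comm M]
      refine mul_le_mul_of_nonneg_left ?_ (exp_pos _).le
      exact abs_integral_le_integral_abs.trans
        (integral_abs_heatKernel_sub_mul_le hs x fun z => hM (z + b * s))
  refine (norm_integral_le_of_norm_le
    ((integrableOn_exp_mul_Ioi (neg_neg_of_pos hlam) 0).const_mul M)
    ((ae_restrict_iff' measurableSet_Ioi).2 (ae_of_all _ hbound))).trans_eq ?_
  rw [integral_const_mul, integral_exp_mul_Ioi (neg_neg_of_pos hlam)]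
  field_simp
  simp

lemma integrable_exp_mul_heatKernel_mul_prod {lam : ℝ} (hlam : 0 < lam) (b x : ℝ)
    (hu : Measurable u) (hM : ∀ z, |u z| ≤ M) :
    Integrable (fun p : ℝ × ℝ => exp (-lam * p.1) * heatKernel p.1 (x - p.2 + b * p.1) * u p.2)
      ((volume.restrict (Ioi 0)).prod volume) := by
  simp_rw [sub_add_eq_add_sub x, mul_assoc]
  have hmeas : Measurable
      fun p : ℝ × ℝ => exp (-lam * p.1) * (heatKernel p.1 (x + b * p.1 - p.2) * u p.2) := by
    unfold heatKernel; fun_prop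
  rw [integrable_prod_iff hmeas.aestronglyMeasurable]
  refine ⟨(ae_restrict_iff' measurableSet_Ioi).2 (ae_of_all _ fun s (hs : 0 < s) => ?_), ?_⟩
  · dsimp only
    exact (((integrable_heatKernel hs.le).comp_sub_left (x + b * s)).mul_bdd
      hu.aestronglyMeasurable (ae_of_all _ hM)).const_mul _
  refine ((integrableOn_exp_mul_Ioi (neg_neg_of_pos hlam) 0).const_mul M).mono'
    hmeas.aestronglyMeasurable.norm.integral_prod_right'
    ((ae_restrict_iff' measurableSet_Ioi).2 (ae_of_all _ fun s (hs : 0 < s) => ?_))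
  simp only [Real.norm_eq_abs, abs_mul (exp _), abs_exp, integral_const_mul,
    abs_of_nonneg (integral_nonneg fun _ => abs_nonneg _)]
  rw [mul_comm M]
  exact mul_le_mul_of_nonneg_left (integral_abs_heatKernel_sub_mul_le hs _ hM) (exp_pos _).le

lemma integral_integral_exp_mul_heatKernel_eq_greenComb {α β : ℝ} (hα : 0 < α) (hβ : 0 < β)
    (hu : Continuous u) (hM : ∀ z, |u z| ≤ M) (x : ℝ) :
    ∫ s in Ioi 0, ∫ z, exp (-(α * β) * s) * heatKernel s (x - z) * u (z + (α - β) * s)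
      = greenComb α β u (α + β)⁻¹ (α + β)⁻¹ x := by
  have hshift : ∀ s, ∫ z, exp (-(α * β) * s) * heatKernel s (x - z) * u (z + (α - β) * s)
      = ∫ w, exp (-(α * β) * s) * heatKernel s (x - w + (α - β) * s) * u w := fun s => by
    rw [← integral_add_right_eq_self
      (fun w => exp (-(α * β) * s) * heatKernel s (x - w + (α - β) * s) * u w) ((α - β) * s)]
    simp only [sub_add_eq_sub_sub, sub_add_cancel]
  have hlaplace : ∀ w, ∫ s in Ioi 0, exp (-(α * β) * s) * heatKernel s (x - w + (α - β) * s) * u w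
      = (α + β)⁻¹ * (exp (-((α - β) * (x - w) + (α + β) * |x - w|) / 2) * u w) := fun w => by
    rw [integral_mul_const, integral_exp_mul_heatKernel_add_mul hα hβ]
    ring
  simp only [hshift]
  rw [integral_integral_swap (integrable_exp_mul_heatKernel_mul_prod (by positivity) (α - β) x
      hu.measurable hM)]
  simp only [hlaplace]
  rw [integral_const_mul, integral_exp_abs_mul_eq_greenComb hα hβ hu hM, greenComb, greenComb]
  ring

end HeatIntegral

lemma exists_pos_mul_eq_sub_eq {lam : ℝ} (hlam : 0 < lam) (b : ℝ) :
    ∃ α β : ℝ, 0 < α ∧ 0 < β ∧ α * β = lam ∧ α - β = b := by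
  set r := √(b ^ 2 + 4 * lam)
  have hr : r ^ 2 = b ^ 2 + 4 * lam := sq_sqrt (by positivity)
  have hbr : |b| < r := by
    rw [← sqrt_sq_eq_abs]
    exact sqrt_lt_sqrt (sq_nonneg _) (by linarith)
  exact ⟨(r + b) / 2, (r - b) / 2, by linarith [neg_abs_le b], by linarith [le_abs_self b],
    by linear_combination hr / 4, by ring⟩

theorem stmt_11_general (c τ lam μ' : ℝ) (hlam : 0 < lam)
    (hμ' : 0 < μ') (u : ℝ → ℝ)
    (huc : UniformContinuous u) (hub : ∃ C, ∀ x, |u x| ≤ C) (hun : ∀ x, 0 ≤ u x)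
    (V : ℝ → ℝ)
    (hV : V = fun x => μ' * ∫ s in Set.Ioi (0:ℝ), ∫ z : ℝ,
      Real.exp (-lam * s) / Real.sqrt (4 * Real.pi * s) *
        Real.exp (-(x - z) ^ 2 / (4 * s)) * u (z + τ * c * s)) :
    ContDiff ℝ 2 V ∧ (∃ C, ∀ x, |V x| ≤ C) ∧ (∀ x, 0 ≤ V x) ∧
    (∀ x : ℝ, deriv (deriv V) x + c * τ * deriv V x - lam * V x + μ' * u x = 0) ∧
    (∀ x : ℝ, |V x| ≤ μ' / lam * ⨆ y, |u y|) := by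
  have hu := huc.continuous
  have hM : ∀ z, |u z| ≤ ⨆ y, |u y| := le_ciSup (hub.imp fun C hC => forall_mem_range.2 hC)
  replace hV : V = fun x => μ' * ∫ s in Ioi 0, ∫ z,
      exp (-lam * s) * heatKernel s (x - z) * u (z + τ * c * s) := by
    simp only [hV, heatKernel, mul_div_assoc', div_mul_eq_mul_div]
  have hbound (x : ℝ) : |V x| ≤ μ' / lam * ⨆ y, |u y| := by
    rw [hV, abs_mul, abs_of_pos hμ', div_mul_eq_mul_div, mul_div_assoc]
    exact mul_le_mul_of_nonneg_left (abs_integral_integral_exp_mul_heatKernel_le hlam _ x hM) hμ'.le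
  obtain ⟨α, β, hα, hβ, rfl, hb⟩ := exists_pos_mul_eq_sub_eq hlam (τ * c)
  have hVG : V = greenComb α β u (μ' / (α + β)) (μ' / (α + β)) := by
    ext x
    simp only [hV, ← hb, integral_integral_exp_mul_heatKernel_eq_greenComb hα hβ hu hM, greenComb]
    ring
  refine ⟨hVG ▸ contDiff_two_greenComb_self hα hβ hu hM _, ⟨_, hbound⟩, fun x => ?_, fun x => ?_,
    hbound⟩
  · rw [hV]
    exact mul_nonneg hμ'.le <| setIntegral_nonneg measurableSet_Ioi fun s _ => integral_nonneg
      fun z => mul_nonneg (mul_nonneg (exp_pos _).le (heatKernel_nonneg _ _)) (hun _)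
  · rw [hVG, deriv_deriv_greenComb_self hα hβ hu hM, mul_comm c, ← hb]
    field_simp
    ring

/-- properties of V(x) := μ'∫₀^∞∫_ℝ (e^{−λs}/√(4πs))e^{−(x−z)²/(4s)}u(z+τcs) dz ds:
it is C², bounded, nonnegative, solves V'' + cτV' − λV + μ'u = 0, and
sup|V| ≤ (μ'/λ)·sup|u|. -/
theorem stmt_11 (c τ lam μ' : ℝ) (hc : 0 ≤ c) (hτ : 0 < τ) (hlam : 0 < lam)
    (hμ' : 0 < μ') (u : ℝ → ℝ)
    (huc : UniformContinuous u) (hub : ∃ C, ∀ x, |u x| ≤ C) (hun : ∀ x, 0 ≤ u x)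
    (V : ℝ → ℝ)
    (hV : V = fun x => μ' * ∫ s in Set.Ioi (0:ℝ), ∫ z : ℝ,
      Real.exp (-lam * s) / Real.sqrt (4 * Real.pi * s) *
        Real.exp (-(x - z) ^ 2 / (4 * s)) * u (z + τ * c * s)) :
    ContDiff ℝ 2 V ∧ (∃ C, ∀ x, |V x| ≤ C) ∧ (∀ x, 0 ≤ V x) ∧
    (∀ x : ℝ, deriv (deriv V) x + c * τ * deriv V x - lam * V x + μ' * u x = 0) ∧
    (∀ x : ℝ, |V x| ≤ μ' / lam * ⨆ y, |u y|) :=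
  stmt_11_general c τ lam μ' hlam hμ' u huc hub hun V hV
end

section
/- (Lemma 4.7) Let c ∈ ℝ and let (U, V₁, V₂) be a traveling wave solution with speed c connecting (a/b, aμ₁/(bλ₁), aμ₂/(bλ₂)) and (0,0,0): U, V₁, V₂ : ℝ → ℝ are bounded, U is nonnegative and C², V₁, V₂ are C², they satisfy 0 = U'' + cU' + (U·(χ₂V₂ − χ₁V₁)')' + U(a − bU) and 0 = Vᵢ'' + cτVᵢ' − λᵢVᵢ + μᵢU on ℝ (i = 1,2), and (U,V₁,V₂)(x) → (a/b, aμ₁/(bλ₁), aμ₂/(bλ₂)) as x → −∞ while (U,V₁,V₂)(x) → (0,0,0) and (V₁'(x), V₂'(x)) → (0,0) as x → +∞. Then there exists X₀ such that U is monotone decreasing on [X₀, ∞). -/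
/-!
With `W = χ₂ V₂ - χ₁ V₁`, the equation for `U` is the linear equation
`U'' + (c + W') U' + (W'' + a - b U) U = 0`. The energy `(U² + U'²) e^{K x}`, nondecreasing
for `K` large on a compact interval, gives backward uniqueness for it, so a zero of the
nonnegative `U`, being a double zero, would make `U` vanish on a half-line, against `U → a/b`
at `-∞`; hence `U > 0`. The `V`-equations give `W'' → 0` at `+∞`, so the coefficient
`W'' + a - b U` is eventually positive and every far-out critical point of `U` has `U'' < 0`.
Two such critical points would enclose a minimum of `U`, itself a critical point and hence a
strict local maximum, which is absurd. So `U'` eventually has one sign, and it cannot be positive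
since `U ≥ 0` tends to `0`.
-/

open Filter Set Topology

section CriticalPoints

variable {f : ℝ → ℝ}

theorem eventually_lt_of_deriv_eq_zero_of_deriv_deriv_neg {t : ℝ} (hf : Continuous f)
    (hd : deriv f t = 0) (hdd : deriv (deriv f) t < 0) : ∀ᶠ s in 𝓝[≠] t, f s < f t := by
  obtain ⟨ε, hε, hsign⟩ := Metric.eventually_nhds_iff.mp
    (eventually_nhdsWithin_sign_eq_of_deriv_neg hdd hd)
  have hsign' : ∀ x ∈ Ioo (t - ε) (t + ε), SignType.sign (deriv f x) = SignType.sign (t - x) :=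
    fun x hx => hsign (by rw [Real.dist_eq, abs_sub_lt_iff]; constructor <;> linarith [hx.1, hx.2])
  rw [← nhdsLT_sup_nhdsGT, eventually_sup]
  constructor
  · filter_upwards [Ioo_mem_nhdsLT (show t - ε < t by linarith)] with s hs
    refine strictMonoOn_of_deriv_pos (convex_Icc s t) hf.continuousOn (fun x hx => ?_)
      (left_mem_Icc.2 hs.2.le) (right_mem_Icc.2 hs.2.le) hs.2
    rw [interior_Icc] at hx
    have := hsign' x ⟨hs.1.trans hx.1, by linarith [hx.2]⟩
    rwa [sign_pos (sub_pos.2 hx.2), sign_eq_one_iff] at this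
  · filter_upwards [Ioo_mem_nhdsGT (show t < t + ε by linarith)] with s hs
    refine strictAntiOn_of_deriv_neg (convex_Icc t s) hf.continuousOn (fun x hx => ?_)
      (left_mem_Icc.2 hs.1.le) (right_mem_Icc.2 hs.1.le) hs.1
    rw [interior_Icc] at hx
    have := hsign' x ⟨by linarith [hx.1], hx.2.trans hs.2⟩
    rwa [sign_neg (sub_neg.2 hx.1), sign_eq_neg_one_iff] at this

theorem Set.OrdConnected.subsingleton_deriv_eq_zero {s : Set ℝ} (hs : s.OrdConnected)
    (hf : Continuous f) (hcrit : ∀ t ∈ s, deriv f t = 0 → deriv (deriv f) t < 0) :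
    {t ∈ s | deriv f t = 0}.Subsingleton := by
  intro t₁ ht₁ t₂ ht₂
  by_contra hne
  wlog hlt : t₁ < t₂ generalizing t₁ t₂
  · exact this ht₂ ht₁ (Ne.symm hne) ((Ne.lt_or_gt hne).resolve_left hlt)
  obtain ⟨z, hz, hmin⟩ := isCompact_Icc.exists_isMinOn (nonempty_Icc.2 hlt.le) hf.continuousOn
  have hdz : deriv f z = 0 := by
    rcases hz.1.eq_or_lt with rfl | h₁
    · exact ht₁.2
    rcases hz.2.eq_or_lt with rfl | h₂
    · exact ht₂.2
    exact (hmin.isLocalMin (Icc_mem_nhds h₁ h₂)).deriv_eq_zero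
  have hmax := eventually_lt_of_deriv_eq_zero_of_deriv_deriv_neg hf hdz
    (hcrit z (hs.out ht₁.1 ht₂.1 hz) hdz)
  obtain ⟨x, hx, hfx⟩ : ∃ x ∈ Icc t₁ t₂, f x < f z := by
    rcases hz.2.lt_or_eq with h₂ | rfl
    · obtain ⟨x, hfx, hx⟩ := (Eventually.and (nhdsGT_le_nhdsNE z hmax : ∀ᶠ x in 𝓝[>] z, f x < f z)
        (Ioo_mem_nhdsGT h₂)).exists
      exact ⟨x, ⟨hz.1.trans hx.1.le, hx.2.le⟩, hfx⟩
    · obtain ⟨x, hfx, hx⟩ := (Eventually.and (nhdsLT_le_nhdsNE z hmax : ∀ᶠ x in 𝓝[<] z, f x < f z)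
        (Ioo_mem_nhdsLT hlt)).exists
      exact ⟨x, ⟨hx.1.le, hx.2.le⟩, hfx⟩
  exact (hmin hx).not_gt hfx

theorem antitoneOn_Ici_of_deriv_ne_zero {l T : ℝ} (hf : Differentiable ℝ f)
    (hl : ∀ x, l ≤ f x) (hlim : Tendsto f atTop (𝓝 l)) (hT : ∀ x ∈ Ioi T, deriv f x ≠ 0) :
    AntitoneOn f (Ici T) := by
  rcases hasDerivWithinAt_forall_lt_or_forall_gt_of_forall_ne (convex_Ioi T)
      (fun x _ => (hf x).hasDerivAt.hasDerivWithinAt) hT with hneg | hpos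
  · refine antitoneOn_of_deriv_nonpos (convex_Ici T) hf.continuous.continuousOn
      hf.differentiableOn fun x hx => ?_
    rw [interior_Ici] at hx
    exact (hneg x hx).le
  · have hmono : StrictMonoOn f (Ici T) := strictMonoOn_of_deriv_pos (convex_Ici T)
      hf.continuous.continuousOn (by rwa [interior_Ici])
    have hle : f (T + 2) ≤ l := ge_of_tendsto hlim <| by
      filter_upwards [eventually_ge_atTop (T + 2)] with x hx
      exact hmono.monotoneOn (by simp) (by simp; linarith) hx
    have hlt : f (T + 1) < f (T + 2) := hmono (by simp) (by simp) (by linarith)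
    linarith [hl (T + 1)]

theorem exists_antitoneOn_Ici_of_deriv_deriv_neg {l X : ℝ} (hf : Differentiable ℝ f)
    (hl : ∀ x, l ≤ f x) (hlim : Tendsto f atTop (𝓝 l))
    (hcrit : ∀ t ∈ Ici X, deriv f t = 0 → deriv (deriv f) t < 0) :
    ∃ T, AntitoneOn f (Ici T) := by
  obtain ⟨T, hT⟩ : ∃ T, ∀ x ∈ Ioi T, deriv f x ≠ 0 := by
    by_cases h : ∃ t ∈ Ici X, deriv f t = 0
    · obtain ⟨t, ht, hdt⟩ := h
      refine ⟨t, fun x hx hdx => hx.out.ne ?_⟩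
      exact ordConnected_Ici.subsingleton_deriv_eq_zero hf.continuous hcrit ⟨ht, hdt⟩
        ⟨le_trans ht hx.out.le, hdx⟩
    · push Not at h
      exact ⟨X, fun x hx => h x hx.out.le⟩
  exact ⟨T, antitoneOn_Ici_of_deriv_ne_zero hf hl hlim hT⟩

end CriticalPoints

section LinearODE

theorem neg_mul_sq_add_sq_le_of_abs_le {u v p q M : ℝ} (hp : |p| ≤ M) (hq : |q| ≤ M) :
    -((1 + 3 * M) * (u ^ 2 + v ^ 2)) ≤ 2 * u * v - 2 * v * (p * v + q * u) := by
  obtain ⟨hp₁, hp₂⟩ := abs_le.mp hp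
  obtain ⟨hq₁, hq₂⟩ := abs_le.mp hq
  nlinarith [sq_nonneg (u + v), sq_nonneg (u - v), mul_nonneg (sub_nonneg.2 hp₂) (sq_nonneg v),
    mul_nonneg (sub_nonneg.2 hq₂) (sq_nonneg (u + v)),
    mul_nonneg (neg_le_iff_add_nonneg.mp hq₁) (sq_nonneg (u - v)),
    mul_nonneg ((abs_nonneg p).trans hp) (sq_nonneg u)]

variable {u P Q : ℝ → ℝ}

theorem eq_zero_of_le_of_linearODE (hP : Continuous P) (hQ : Continuous Q)
    (hu : Differentiable ℝ u) (hu' : Differentiable ℝ (deriv u))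
    (hode : ∀ x, deriv (deriv u) x = -(P x * deriv u x + Q x * u x))
    {x₀ : ℝ} (h₀ : u x₀ = 0) (h₀' : deriv u x₀ = 0) {x : ℝ} (hx : x ≤ x₀) : u x = 0 := by
  obtain ⟨M₁, hM₁⟩ := (isCompact_Icc (a := x) (b := x₀)).exists_bound_of_continuousOn
    hP.continuousOn
  obtain ⟨M₂, hM₂⟩ := (isCompact_Icc (a := x) (b := x₀)).exists_bound_of_continuousOn
    hQ.continuousOn
  set K := 1 + 3 * max M₁ M₂
  set E : ℝ → ℝ := fun t => (u t ^ 2 + deriv u t ^ 2) * Real.exp (K * t)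
  have hE : ∀ t, HasDerivAt E ((2 * u t * deriv u t + 2 * deriv u t * deriv (deriv u) t
      + K * (u t ^ 2 + deriv u t ^ 2)) * Real.exp (K * t)) t := by
    intro t
    have := ((((hu t).hasDerivAt.fun_pow 2).fun_add ((hu' t).hasDerivAt.fun_pow 2)).fun_mul
      ((hasDerivAt_id t).const_mul K).exp)
    refine this.congr_deriv ?_
    simp only [id_eq]
    ring
  have hmono : MonotoneOn E (Icc x x₀) := by
    refine monotoneOn_of_hasDerivWithinAt_nonneg (convex_Icc x x₀)
      (fun t _ => (hE t).continuousAt.continuousWithinAt) (fun t _ => (hE t).hasDerivWithinAt)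
      fun t ht => ?_
    have ht' := interior_subset ht
    rw [hode t]
    refine mul_nonneg ?_ (Real.exp_pos _).le
    have := neg_mul_sq_add_sq_le_of_abs_le (u := u t) (v := deriv u t)
      ((hM₁ t ht').trans (le_max_left _ _)) ((hM₂ t ht').trans (le_max_right _ _))
    linarith
  have hE₀ : E x₀ = 0 := by simp [E, h₀, h₀']
  have hEx : E x = 0 := le_antisymm (hE₀ ▸ hmono ⟨le_rfl, hx⟩ ⟨hx, le_rfl⟩ hx)
    (by positivity)
  have hsq : u x ^ 2 + deriv u x ^ 2 = 0 :=
    (mul_eq_zero.mp hEx).resolve_right (Real.exp_pos _).ne'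
  nlinarith [sq_nonneg (u x), sq_nonneg (deriv u x)]

theorem pos_of_linearODE (hP : Continuous P) (hQ : Continuous Q)
    (hu : Differentiable ℝ u) (hu' : Differentiable ℝ (deriv u))
    (hode : ∀ x, deriv (deriv u) x = -(P x * deriv u x + Q x * u x))
    {L : ℝ} (hnn : ∀ x, 0 ≤ u x) (hlim : Tendsto u atBot (𝓝 L)) (hL : L ≠ 0) (x₀ : ℝ) :
    0 < u x₀ := by
  by_contra hx₀
  have h₀ : u x₀ = 0 := le_antisymm (not_lt.mp hx₀) (hnn x₀)
  have h₀' : deriv u x₀ = 0 := IsLocalMin.deriv_eq_zero <| Eventually.of_forall fun y => h₀ ▸ hnn y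
  have hzero : u =ᶠ[atBot] fun _ => 0 := eventually_atBot.mpr
    ⟨x₀, fun x hx => eq_zero_of_le_of_linearODE hP hQ hu hu' hode h₀ h₀' hx⟩
  exact hL (tendsto_nhds_unique (hlim.congr' hzero) tendsto_const_nhds)

end LinearODE

theorem tendsto_deriv_deriv_of_eq {V U : ℝ → ℝ} {k lam μ : ℝ} {l : Filter ℝ}
    (heq : ∀ x, 0 = deriv (deriv V) x + k * deriv V x - lam * V x + μ * U x)
    (hV : Tendsto V l (𝓝 0)) (hV' : Tendsto (deriv V) l (𝓝 0)) (hU : Tendsto U l (𝓝 0)) :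
    Tendsto (deriv (deriv V)) l (𝓝 0) := by
  have := ((hV.const_mul lam).sub (hU.const_mul μ)).sub (hV'.const_mul k)
  simp only [mul_zero, sub_zero] at this
  exact this.congr fun x => by linarith [heq x]

theorem stmt_18_general (a b c τ χ₁ χ₂ lam₁ lam₂ μ₁ μ₂ : ℝ)
    (ha : 0 < a) (hb : 0 < b)
    (U V₁ V₂ : ℝ → ℝ)
    (hUnn : ∀ x, 0 ≤ U x)
    (hU : ContDiff ℝ 2 U) (hV₁ : ContDiff ℝ 2 V₁) (hV₂ : ContDiff ℝ 2 V₂)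
    (heqU : ∀ x : ℝ, 0 = deriv (deriv U) x + c * deriv U x +
        deriv (fun y => U y * deriv (fun z => χ₂ * V₂ z - χ₁ * V₁ z) y) x +
        U x * (a - b * U x))
    (heqV₁ : ∀ x : ℝ, 0 = deriv (deriv V₁) x + c * τ * deriv V₁ x - lam₁ * V₁ x + μ₁ * U x)
    (heqV₂ : ∀ x : ℝ, 0 = deriv (deriv V₂) x + c * τ * deriv V₂ x - lam₂ * V₂ x + μ₂ * U x)
    (hUbot : Tendsto U atBot (nhds (a / b)))
    (hUtop : Tendsto U atTop (nhds 0))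
    (hV₁top : Tendsto V₁ atTop (nhds 0))
    (hV₂top : Tendsto V₂ atTop (nhds 0))
    (hV₁'top : Tendsto (deriv V₁) atTop (nhds 0))
    (hV₂'top : Tendsto (deriv V₂) atTop (nhds 0)) :
    ∃ X₀ : ℝ, AntitoneOn U (Set.Ici X₀) := by
  set W' : ℝ → ℝ := fun x => χ₂ * deriv V₂ x - χ₁ * deriv V₁ x
  set W'' : ℝ → ℝ := fun x => χ₂ * deriv (deriv V₂) x - χ₁ * deriv (deriv V₁) x
  have hW' : deriv (fun z => χ₂ * V₂ z - χ₁ * V₁ z) = W' := funext fun x =>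
    (((hV₂.differentiable two_ne_zero x).hasDerivAt.const_mul χ₂).sub
      ((hV₁.differentiable two_ne_zero x).hasDerivAt.const_mul χ₁)).deriv
  have hW'' : ∀ x, HasDerivAt W' (W'' x) x := fun x =>
    ((hV₂.differentiable_deriv_two x).hasDerivAt.const_mul χ₂).sub
      ((hV₁.differentiable_deriv_two x).hasDerivAt.const_mul χ₁)
  have hW''c : Continuous W'' := ((hV₂.deriv' (n := 1)).continuous_deriv_one.const_mul χ₂).sub
    ((hV₁.deriv' (n := 1)).continuous_deriv_one.const_mul χ₁)
  have hode : ∀ x,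
      deriv (deriv U) x = -((c + W' x) * deriv U x + (W'' x + a - b * U x) * U x) := by
    intro x
    have := heqU x
    rw [hW', ((hU.differentiable two_ne_zero x).hasDerivAt.fun_mul (hW'' x)).deriv] at this
    linarith
  have hQtop : Tendsto (fun x => W'' x + a - b * U x) atTop (𝓝 a) := by
    have := (((tendsto_deriv_deriv_of_eq heqV₂ hV₂top hV₂'top hUtop).const_mul χ₂).sub
      ((tendsto_deriv_deriv_of_eq heqV₁ hV₁top hV₁'top hUtop).const_mul χ₁)).add_const a |>.sub
      (hUtop.const_mul b)
    simpa using this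
  obtain ⟨X, hX⟩ := eventually_atTop.mp (hQtop.eventually_const_lt ha)
  have hpos := pos_of_linearODE (P := fun x => c + W' x) (Q := fun x => W'' x + a - b * U x)
    (continuous_const.add (continuous_iff_continuousAt.2 fun x => (hW'' x).continuousAt))
    (by fun_prop) (hU.differentiable two_ne_zero) hU.differentiable_deriv_two hode
    hUnn hUbot (div_pos ha hb).ne'
  refine exists_antitoneOn_Ici_of_deriv_deriv_neg (hU.differentiable two_ne_zero) hUnn hUtop
    (X := X) fun t ht hdt => ?_
  rw [hode t, hdt]
  nlinarith [mul_pos (hX t ht) (hpos t)]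

/-- Lemma 4.7: the profile U of a traveling wave connecting
(a/b, aμ₁/(bλ₁), aμ₂/(bλ₂)) and (0,0,0) is eventually monotone decreasing. -/
theorem stmt_18 (a b c τ χ₁ χ₂ lam₁ lam₂ μ₁ μ₂ : ℝ)
    (ha : 0 < a) (hb : 0 < b) (hτ : 0 < τ)
    (hχ₁ : 0 < χ₁) (hχ₂ : 0 < χ₂) (hlam₁ : 0 < lam₁) (hlam₂ : 0 < lam₂)
    (hμ₁ : 0 < μ₁) (hμ₂ : 0 < μ₂)
    (U V₁ V₂ : ℝ → ℝ)
    (hUbd : ∃ C, ∀ x, |U x| ≤ C) (hV₁bd : ∃ C, ∀ x, |V₁ x| ≤ C)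
    (hV₂bd : ∃ C, ∀ x, |V₂ x| ≤ C)
    (hUnn : ∀ x, 0 ≤ U x)
    (hU : ContDiff ℝ 2 U) (hV₁ : ContDiff ℝ 2 V₁) (hV₂ : ContDiff ℝ 2 V₂)
    (heqU : ∀ x : ℝ, 0 = deriv (deriv U) x + c * deriv U x +
        deriv (fun y => U y * deriv (fun z => χ₂ * V₂ z - χ₁ * V₁ z) y) x +
        U x * (a - b * U x))
    (heqV₁ : ∀ x : ℝ, 0 = deriv (deriv V₁) x + c * τ * deriv V₁ x - lam₁ * V₁ x + μ₁ * U x)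
    (heqV₂ : ∀ x : ℝ, 0 = deriv (deriv V₂) x + c * τ * deriv V₂ x - lam₂ * V₂ x + μ₂ * U x)
    (hUbot : Tendsto U atBot (nhds (a / b)))
    (hV₁bot : Tendsto V₁ atBot (nhds (a * μ₁ / (b * lam₁))))
    (hV₂bot : Tendsto V₂ atBot (nhds (a * μ₂ / (b * lam₂))))
    (hUtop : Tendsto U atTop (nhds 0))
    (hV₁top : Tendsto V₁ atTop (nhds 0))
    (hV₂top : Tendsto V₂ atTop (nhds 0))
    (hV₁'top : Tendsto (deriv V₁) atTop (nhds 0))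
    (hV₂'top : Tendsto (deriv V₂) atTop (nhds 0)) :
    ∃ X₀ : ℝ, AntitoneOn U (Set.Ici X₀) :=
  stmt_18_general a b c τ χ₁ χ₂ lam₁ lam₂ μ₁ μ₂ ha hb U V₁ V₂ hUnn hU hV₁ hV₂ heqU heqV₁ heqV₂ hUbot
    hUtop hV₁top hV₂top hV₁'top hV₂'top
end
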